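/- arXiv:2502.00598 — 3 statements merged into one kernel-verified Lean document; each statement's English description precedes it below -/
import Mathlib

section
/- Let S ⊆ ℤ² be any finite generating set. Then there is a continuous proper edge (2|S|+1)-coloring of the Schreier graph on F(2^{ℤ²}) with generating set S. -/
/-!
Choose a set `T` containing exactly one of `±g` for every nonzero `g ∈ S`. For each `t ∈ T` we
build a clopen marker set `B t` that meets every forward `t`-ray, never contains both `x` and
`t + x`, and whose zone `B t ∪ (B t - t)` is disjoint from the zones of the other directions.
The edge `{x, t + x}` gets the colour `none` if `t + x ∈ B t`, and otherwise `some (t, parity)`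
of the number of `t`-steps from `x` to the next marker: consecutive `t`-edges get opposite
parities, and two edges coloured `none` at a common vertex would put it into two zones. This
uses `2 |T| + 1 ≤ 2 |S| + 1` colours.

The markers are chosen greedily along the values of a locally constant key that distinguishes
`x` from `g + x` for all short `g` (it records an aperiodic window of `x`). Each marker set is a
maximal subset of the complement of the earlier zones that is `J`-separated along its own
direction and `W`-separated along the others, with `J ≫ W`; counting on a stretch of length `8 J`
of a `t`-ray shows that the points excluded from `B t` cannot cover it, so every ray is hit.
-/

/-- The space `2^{ℤⁿ}` with the product topology. -/
abbrev Space (n : ℕ) : Type := (Fin n → ℤ) → Bool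

/-- The Bernoulli shift action: `(g · x)(h) = x(g + h)`. -/
def shift {n : ℕ} (g : Fin n → ℤ) (x : Space n) : Space n := fun h => x (g + h)

/-- The free part `F(2^{ℤⁿ})` of the shift action. -/
def FreePart (n : ℕ) : Set (Space n) := {x | ∀ g : Fin n → ℤ, g ≠ 0 → shift g x ≠ x}

/-- The sup norm on `ℤⁿ`, valued in `ℕ`. -/
def gnorm {n : ℕ} (g : Fin n → ℤ) : ℕ := Finset.univ.sup fun i => (g i).natAbs

/-- The Schreier graph of `F(2^{ℤ²})` with generating set `S`. -/
def SchreierS (S : Finset (Fin 2 → ℤ)) : SimpleGraph (FreePart 2) :=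
  SimpleGraph.fromRel fun x y => ∃ g ∈ S, shift g (x : Space 2) = (y : Space 2)


noncomputable section

open scoped Classical

open Filter Topology

section ShiftAction

variable {n : ℕ}

lemma shift_shift (g h : Fin n → ℤ) (x : Space n) : shift g (shift h x) = shift (g + h) x := by
  funext v
  simp only [shift, add_left_comm, add_comm]

lemma shift_zero (x : Space n) : shift 0 x = x := by
  funext v
  simp [shift]

lemma continuous_shift (g : Fin n → ℤ) : Continuous (shift g) :=
  continuous_pi fun h => continuous_apply (g + h)

lemma shift_mem_freePart (g : Fin n → ℤ) {x : Space n} (hx : x ∈ FreePart n) :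
    shift g x ∈ FreePart n := by
  intro h hh hfix
  apply hx h hh
  have := congrArg (shift (-g)) hfix
  rwa [shift_shift, shift_shift, shift_shift, add_comm (-g), add_assoc, neg_add_cancel,
    add_zero, shift_zero] at this

instance : VAdd (Fin n → ℤ) (FreePart n) where
  vadd g x := ⟨shift g x, shift_mem_freePart g x.2⟩

@[simp]
lemma coe_vadd (g : Fin n → ℤ) (x : FreePart n) : ((g +ᵥ x : FreePart n) : Space n) = shift g x :=
  rfl

instance : AddAction (Fin n → ℤ) (FreePart n) where
  zero_vadd x := Subtype.ext (shift_zero x.1)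
  add_vadd g h x := Subtype.ext (shift_shift g h x.1).symm

instance : ContinuousConstVAdd (Fin n → ℤ) (FreePart n) where
  continuous_const_vadd g :=
    ((continuous_shift g).comp continuous_subtype_val).subtype_mk _

lemma eq_zero_of_vadd_eq_self {g : Fin n → ℤ} {x : FreePart n} (h : g +ᵥ x = x) : g = 0 := by
  by_contra hg
  exact x.2 g hg (congrArg Subtype.val h)

lemma schreierS_adj_iff {S : Finset (Fin 2 → ℤ)} {x y : FreePart 2} :
    (SchreierS S).Adj x y ↔ x ≠ y ∧ ∃ g ∈ S, g +ᵥ x = y ∨ g +ᵥ y = x := by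
  simp only [SchreierS, SimpleGraph.fromRel_adj, Subtype.ext_iff, coe_vadd]
  constructor
  · rintro ⟨hne, ⟨g, hg, h⟩ | ⟨g, hg, h⟩⟩
    exacts [⟨hne, g, hg, .inl h⟩, ⟨hne, g, hg, .inr h⟩]
  · rintro ⟨hne, g, hg, h | h⟩
    exacts [⟨hne, .inl ⟨g, hg, h⟩⟩, ⟨hne, .inr ⟨g, hg, h⟩⟩]

end ShiftAction

section SignTransversal

variable {G : Type*} [AddGroup G]

structure IsSignTransversal (S T : Finset G) : Prop where
  zero_notMem : (0 : G) ∉ T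
  neg_notMem : ∀ t ∈ T, -t ∉ T
  mem_or_neg_mem : ∀ g ∈ S, g ≠ 0 → g ∈ T ∨ -g ∈ T

lemma exists_isSignTransversal [IsAddTorsionFree G] (S : Finset G) :
    ∃ T, IsSignTransversal S T ∧ T.card ≤ S.card := by
  induction S using Finset.induction_on with
  | empty => exact ⟨∅, ⟨by simp, by simp, by simp⟩, le_rfl⟩
  | @insert g S hg ih =>
    obtain ⟨T, hT, hcard⟩ := ih
    by_cases hkeep : g = 0 ∨ g ∈ T ∨ -g ∈ T
    · refine ⟨T, ⟨hT.zero_notMem, hT.neg_notMem, ?_⟩, hcard.trans (Finset.card_le_card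
        (Finset.subset_insert _ _))⟩
      intro a ha ha0
      rcases Finset.mem_insert.mp ha with rfl | ha
      · tauto
      · exact hT.mem_or_neg_mem a ha ha0
    push Not at hkeep
    obtain ⟨hg0, hgT, hgT'⟩ := hkeep
    refine ⟨insert g T, ⟨?_, ?_, ?_⟩, ?_⟩
    · simpa [eq_comm, hg0] using hT.zero_notMem
    · intro t ht
      rcases Finset.mem_insert.mp ht with rfl | ht
      · simpa [neg_eq_self, hg0] using hgT'
      · simp only [Finset.mem_insert, not_or]
        exact ⟨fun h => hgT' (by rwa [← h, neg_neg]), hT.neg_notMem t ht⟩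
    · intro a ha ha0
      rcases Finset.mem_insert.mp ha with rfl | ha
      · simp
      · rcases hT.mem_or_neg_mem a ha ha0 with h | h <;> simp [h]
    · rw [Finset.card_insert_of_notMem hg]
      exact (Finset.card_insert_le _ _).trans (by omega)

end SignTransversal

section Keys

variable {n : ℕ}

lemma gnorm_le_iff {g : Fin n → ℤ} {r : ℕ} : gnorm g ≤ r ↔ ∀ i, (g i).natAbs ≤ r := by
  simp [gnorm]

lemma gnorm_add_le (g h : Fin n → ℤ) : gnorm (g + h) ≤ gnorm g + gnorm h :=
  gnorm_le_iff.mpr fun i => (Int.natAbs_add_le _ _).trans <|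
    add_le_add (gnorm_le_iff.mp le_rfl i) (gnorm_le_iff.mp le_rfl i)

def box (r : ℕ) : Finset (Fin n → ℤ) := Finset.Icc (fun _ => -(r : ℤ)) (fun _ => r)

lemma mem_box {v : Fin n → ℤ} {r : ℕ} : v ∈ box r ↔ gnorm v ≤ r := by
  simp only [box, Finset.mem_Icc, Pi.le_def, gnorm_le_iff, ← forall_and]
  exact forall_congr' fun i => by omega

lemma eventually_forall_coe_apply_eq (x : FreePart n) (F : Finset (Fin n → ℤ)) :
    ∀ᶠ y : FreePart n in 𝓝 x, ∀ v ∈ F, (y : Space n) v = (x : Space n) v :=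
  (eventually_all_finset F).mpr fun v _ =>
    ((continuous_apply v).comp continuous_subtype_val).continuousAt.eventually_mem
      (isOpen_discrete {(x : Space n) v} |>.mem_nhds rfl)

variable (D : Finset (Fin n → ℤ))

def SeparatesWithin (x : Space n) (r : ℕ) : Prop :=
  ∀ g ∈ D, ∃ h, gnorm h ≤ r ∧ shift g x h ≠ x h

lemma exists_separatesWithin {D} (hD : 0 ∉ D) (x : FreePart n) :
    ∃ r, SeparatesWithin D (x : Space n) r := by
  have hwit : ∀ g ∈ D, ∃ h, shift g (x : Space n) h ≠ (x : Space n) h := fun g hg =>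
    Function.ne_iff.mp (x.2 g (ne_of_mem_of_not_mem hg hD))
  choose! w hw using hwit
  exact ⟨D.sup fun g => gnorm (w g), fun g hg =>
    ⟨w g, Finset.le_sup (f := fun g => gnorm (w g)) hg, hw g hg⟩⟩

lemma SeparatesWithin.of_agree {D} {x y : Space n} {r : ℕ} (hx : SeparatesWithin D x r)
    (hxy : ∀ v, gnorm v ≤ r + D.sup gnorm → y v = x v) : SeparatesWithin D y r := by
  intro g hg
  obtain ⟨h, hh, hne⟩ := hx g hg
  refine ⟨h, hh, ?_⟩
  have hgD : gnorm g ≤ D.sup gnorm := Finset.le_sup hg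
  simp only [shift] at hne ⊢
  rwa [hxy h (by omega), hxy (g + h) ((gnorm_add_le g h).trans (by omega))]

def keyRadius (x : FreePart n) : ℕ := sInf {r | SeparatesWithin D (x : Space n) r}

def key (x : FreePart n) : ℕ :=
  Encodable.encode (keyRadius D x, (box (keyRadius D x)).filter fun v => (x : Space n) v)

variable {D}

lemma separatesWithin_keyRadius (hD : 0 ∉ D) (x : FreePart n) :
    SeparatesWithin D (x : Space n) (keyRadius D x) :=
  Nat.sInf_mem (exists_separatesWithin hD x)

lemma key_eq_of_agree (hD : 0 ∉ D) {x y : FreePart n}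
    (hxy : ∀ v, gnorm v ≤ keyRadius D x + D.sup gnorm → (y : Space n) v = (x : Space n) v) :
    key D y = key D x := by
  have hy : SeparatesWithin D (y : Space n) (keyRadius D x) :=
    (separatesWithin_keyRadius hD x).of_agree hxy
  have hle : keyRadius D y ≤ keyRadius D x := Nat.sInf_le hy
  have hx : SeparatesWithin D (x : Space n) (keyRadius D y) :=
    (separatesWithin_keyRadius hD y).of_agree fun v hv => (hxy v (by omega)).symm
  have hrad : keyRadius D y = keyRadius D x := hle.antisymm (Nat.sInf_le hx)
  rw [key, key, hrad]
  congr 2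
  exact Finset.filter_congr fun v hv => by rw [hxy v (by have := mem_box.mp hv; omega)]

lemma isLocallyConstant_key (hD : 0 ∉ D) : IsLocallyConstant (key D) :=
  (IsLocallyConstant.iff_eventually_eq _).mpr fun x =>
    (eventually_forall_coe_apply_eq x (box (keyRadius D x + D.sup gnorm))).mono fun _ hy =>
      key_eq_of_agree hD fun v hv => hy v (mem_box.mpr hv)

lemma key_vadd_ne (hD : 0 ∉ D) (x : FreePart n) {g : Fin n → ℤ} (hg : g ∈ D) :
    key D (g +ᵥ x) ≠ key D x := by
  intro heq
  obtain ⟨hrad, hpat⟩ := Prod.mk.inj (Encodable.encode_injective heq)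
  obtain ⟨h, hh, hne⟩ := separatesWithin_keyRadius hD x g hg
  have hmem := Finset.ext_iff.mp hpat h
  simp only [hrad, Finset.mem_filter, mem_box, coe_vadd, hh, true_and] at hmem
  exact hne (Bool.eq_iff_iff.mpr hmem)

theorem exists_isLocallyConstant_vadd_ne (hD : 0 ∉ D) :
    ∃ κ : FreePart n → ℕ, IsLocallyConstant κ ∧ ∀ x, ∀ g ∈ D, κ (g +ᵥ x) ≠ κ x :=
  ⟨key D, isLocallyConstant_key hD, fun x _ hg => key_vadd_ne hD x hg⟩

end Keys

lemma IsLocallyConstant.isClopen_setOf_mem {X ι : Type*} [TopologicalSpace X] {κ : X → ι}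
    (hκ : IsLocallyConstant κ) {A : ι → Set X} (hA : ∀ i, IsClopen (A i)) :
    IsClopen {x | x ∈ A (κ x)} := by
  have hopen : ∀ B : ι → Set X, (∀ i, IsOpen (B i)) → IsOpen {x | x ∈ B (κ x)} := by
    intro B hB
    have hunion : {x | x ∈ B (κ x)} = ⋃ i, κ ⁻¹' {i} ∩ B i := by ext x; simp
    rw [hunion]
    exact isOpen_iUnion fun i => (hκ.isOpen_fiber i).inter (hB i)
  exact ⟨isOpen_compl_iff.mp (hopen (fun i => (A i)ᶜ) fun i => (hA i).compl.isOpen),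
    hopen A fun i => (hA i).isOpen⟩

section Greedy

variable {G X : Type*} [AddGroup G] [AddAction G X] (D : Finset G) (κ : X → ℕ) (Z : Set X)

def greedyBelow : ℕ → Set X
  | 0 => ∅
  | K + 1 => greedyBelow K ∪ {x | κ x = K ∧ x ∉ Z ∧ ∀ g ∈ D, g +ᵥ x ∉ greedyBelow K}

def greedy : Set X := {x | x ∉ Z ∧ ∀ g ∈ D, g +ᵥ x ∉ greedyBelow D κ Z (κ x)}

variable {D κ Z}

lemma mem_greedyBelow_iff {x : X} {K : ℕ} :
    x ∈ greedyBelow D κ Z K ↔ κ x < K ∧ x ∈ greedy D κ Z := by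
  induction K with
  | zero => simp [greedyBelow]
  | succ K ih =>
    simp only [greedyBelow, Set.mem_union, Set.mem_ofPred_eq, ih, greedy]
    constructor
    · rintro (⟨hlt, hx⟩ | ⟨rfl, hx⟩)
      exacts [⟨by omega, hx⟩, ⟨by omega, hx⟩]
    · rintro ⟨hlt, hx⟩
      rcases Nat.lt_succ_iff_lt_or_eq.mp hlt with hlt | rfl
      exacts [.inl ⟨hlt, hx⟩, .inr ⟨rfl, hx⟩]

lemma notMem_of_mem_greedy {x : X} (hx : x ∈ greedy D κ Z) : x ∉ Z := hx.1

lemma vadd_notMem_greedy (hD : ∀ g ∈ D, -g ∈ D) (hκ : ∀ x, ∀ g ∈ D, κ (g +ᵥ x) ≠ κ x) {x : X}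
    (hx : x ∈ greedy D κ Z) {g : G} (hg : g ∈ D) : g +ᵥ x ∉ greedy D κ Z := by
  intro hgx
  rcases (hκ x g hg).lt_or_gt with hlt | hlt
  · exact hx.2 g hg (mem_greedyBelow_iff.mpr ⟨hlt, hgx⟩)
  · refine hgx.2 (-g) (hD g hg) ?_
    rw [neg_vadd_vadd]
    exact mem_greedyBelow_iff.mpr ⟨hlt, hx⟩

lemma mem_greedy_or_exists_vadd_mem {x : X} (hx : x ∉ Z) :
    x ∈ greedy D κ Z ∨ ∃ g ∈ D, g +ᵥ x ∈ greedy D κ Z := by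
  by_contra! h
  obtain ⟨g, hg, hgx⟩ : ∃ g ∈ D, g +ᵥ x ∈ greedyBelow D κ Z (κ x) := by
    by_contra! h'
    exact h.1 ⟨hx, h'⟩
  exact h.2 g hg (mem_greedyBelow_iff.mp hgx).2

variable [TopologicalSpace X] [ContinuousConstVAdd G X]

lemma isClopen_avoiding {A : Set X} (hA : IsClopen A) : IsClopen {x | ∀ g ∈ D, g +ᵥ x ∉ A} := by
  have hinter : {x | ∀ g ∈ D, g +ᵥ x ∉ A} = ⋂ g ∈ D, (g +ᵥ ·) ⁻¹' Aᶜ := by ext; simp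
  rw [hinter]
  exact isClopen_biInter_finset fun g _ => hA.compl.preimage (continuous_const_vadd g)

lemma isClopen_greedyBelow (hκ : IsLocallyConstant κ) (hZ : IsClopen Z) (K : ℕ) :
    IsClopen (greedyBelow D κ Z K) := by
  induction K with
  | zero => exact isClopen_empty
  | succ K ih =>
    exact ih.union ((hκ.isClopen_fiber K).inter (hZ.compl.inter (isClopen_avoiding ih)))

lemma isClopen_greedy (hκ : IsLocallyConstant κ) (hZ : IsClopen Z) :
    IsClopen (greedy D κ Z) :=
  hκ.isClopen_setOf_mem (A := fun K => Zᶜ ∩ {x | ∀ g ∈ D, g +ᵥ x ∉ greedyBelow D κ Z K})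
    fun K => hZ.compl.inter (isClopen_avoiding (isClopen_greedyBelow hκ hZ K))

end Greedy

lemma Int.card_mul_le_of_separated {s : Finset ℤ} {a b : ℤ} {d : ℕ} (hs : s ⊆ Finset.Icc a b)
    (hsep : ∀ m ∈ s, ∀ l ∈ s, m < l → m + d ≤ l) : s.card * d ≤ (b + d - a).toNat := by
  have hdisj : (s : Set ℤ).PairwiseDisjoint fun m => Finset.Ico m (m + d) := by
    intro m hm l hl hne
    simp only [Function.onFun, Finset.disjoint_left, Finset.mem_Ico]
    rcases hne.lt_or_gt with h | h
    · have := hsep m hm l hl h; omega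
    · have := hsep l hl m hm h; omega
  have hsub : s.biUnion (fun m => Finset.Ico m (m + d)) ⊆ Finset.Ico a (b + d) := by
    intro x hx
    obtain ⟨m, hm, hx⟩ := Finset.mem_biUnion.mp hx
    have := Finset.mem_Icc.mp (hs hm)
    simp only [Finset.mem_Ico] at hx ⊢
    omega
  have := Finset.card_le_card hsub
  simpa [Finset.card_biUnion hdisj, Int.card_Ico] using this

section SeparationConstants

/- Markers of direction `t` are `selfSep`-separated along `t` and `crossSep`-separated along the
other directions; the sizes make the count in `exists_zsmul_vadd_mem_marker` work:
`8 J + 1 > 9 n (2 W + 1) + 4 n (8 W + 1)` for `W = 8 (n + 1)` and `J = W²`. -/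

variable {G : Type*} (ts : List G)

def crossSep : ℕ := 8 * (ts.length + 1)

def selfSep : ℕ := crossSep ts ^ 2

lemma selfSep_pos : 0 < selfSep ts := by
  unfold selfSep crossSep
  positivity

def reach (t t' : G) : ℕ := if t' = t then selfSep ts else crossSep ts

lemma reach_le_selfSep (t t' : G) : reach ts t t' ≤ selfSep ts := by
  unfold reach selfSep
  split_ifs
  · exact le_rfl
  · exact Nat.le_self_pow two_ne_zero _

end SeparationConstants

section Markers

variable {G X : Type*} [AddCommGroup G] [AddAction G X]

def zone (B : Set X) (t : G) : Set X := B ∪ (t +ᵥ ·) ⁻¹' B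

structure IsMarkerFamily [TopologicalSpace X] (T : Finset G) (B : G → Set X) : Prop where
  isClopen : ∀ t ∈ T, IsClopen (B t)
  vadd_notMem : ∀ t ∈ T, ∀ x ∈ B t, t +ᵥ x ∉ B t
  exists_nsmul_vadd_mem : ∀ t ∈ T, ∀ x, ∃ m : ℕ, (m + 1) • t +ᵥ x ∈ B t
  disjoint_zone : ∀ t ∈ T, ∀ t' ∈ T, t ≠ t' → Disjoint (zone (B t) t) (zone (B t') t')

def SeparatedAlong (B : Set X) (t : G) (d : ℕ) : Prop :=
  ∀ y ∈ B, ∀ k : ℤ, 0 < k → k ≤ d → k • t +ᵥ y ∉ B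

lemma SeparatedAlong.card_filter_mul_le {B : Set X} {t : G} {d : ℕ} (hB : SeparatedAlong B t d)
    (c : G) (x : X) (a b : ℤ) :
    ((Finset.Icc a b).filter fun k => (c + k • t) +ᵥ x ∈ B).card * (d + 1) ≤
      (b + (d + 1 : ℕ) - a).toNat := by
  refine Int.card_mul_le_of_separated (Finset.filter_subset _ _) fun m hm l hl hml => ?_
  by_contra! hlt
  refine hB _ (Finset.mem_filter.mp hm).2 (l - m) (by omega) (by push_cast at hlt; omega) ?_
  rw [vadd_vadd, add_left_comm, ← add_smul, sub_add_cancel]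
  exact (Finset.mem_filter.mp hl).2

variable (ts : List G)

def conflicts (t : G) : Finset G :=
  ((ts.toFinset ×ˢ Finset.Icc (-(selfSep ts : ℤ)) (selfSep ts)).filter
    fun p => p.2 ≠ 0 ∧ p.2.natAbs ≤ reach ts t p.1).image fun p => p.2 • p.1

variable {ts}

lemma mem_conflicts {t g : G} :
    g ∈ conflicts ts t ↔ ∃ t' ∈ ts, ∃ k : ℤ, k ≠ 0 ∧ k.natAbs ≤ reach ts t t' ∧ k • t' = g := by
  simp only [conflicts, Finset.mem_image, Finset.mem_filter, Finset.mem_product,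
    List.mem_toFinset, Finset.mem_Icc, Prod.exists]
  constructor
  · rintro ⟨t', k, ⟨⟨ht', -⟩, hk, hkr⟩, rfl⟩
    exact ⟨t', ht', k, hk, hkr, rfl⟩
  · rintro ⟨t', ht', k, hk, hkr, rfl⟩
    have := reach_le_selfSep ts t t'
    exact ⟨t', k, ⟨⟨ht', by omega, by omega⟩, hk, hkr⟩, rfl⟩

lemma neg_mem_conflicts {t g : G} (hg : g ∈ conflicts ts t) : -g ∈ conflicts ts t := by
  obtain ⟨t', ht', k, hk, hkr, rfl⟩ := mem_conflicts.mp hg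
  exact mem_conflicts.mpr ⟨t', ht', -k, neg_ne_zero.mpr hk, by simpa using hkr, neg_smul k t'⟩

variable (ts) (κ : X → ℕ)

-- A marker point `b` puts both `b` and `-t + b` into its zone.
def forbidden (t : G) (Z : Set X) : Set X := Z ∪ ((-t) +ᵥ ·) ⁻¹' Z

def markerAvoiding (i : ℕ) (Z : Set X) : Set X :=
  greedy (conflicts ts (ts.getD i 0)) κ (forbidden (ts.getD i 0) Z)

def zonesBelow : ℕ → Set X
  | 0 => ∅
  | i + 1 => zonesBelow i ∪ zone (markerAvoiding ts κ i (zonesBelow i)) (ts.getD i 0)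

def marker (i : ℕ) : Set X := markerAvoiding ts κ i (zonesBelow ts κ i)

variable {ts κ}

lemma mem_zonesBelow_iff {x : X} {i : ℕ} :
    x ∈ zonesBelow ts κ i ↔ ∃ j < i, x ∈ zone (marker ts κ j) (ts.getD j 0) := by
  induction i with
  | zero => simp [zonesBelow]
  | succ i ih =>
    simp only [zonesBelow, Set.mem_union, ih, Nat.lt_succ_iff_lt_or_eq, or_and_right, exists_or,
      exists_eq_left, marker]

lemma marker_zone_disjoint {i j : ℕ} (hji : j < i) {x : X}
    (hj : x ∈ zone (marker ts κ j) (ts.getD j 0)) : x ∉ zone (marker ts κ i) (ts.getD i 0) := by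
  have hZ : x ∈ zonesBelow ts κ i := mem_zonesBelow_iff.mpr ⟨j, hji, hj⟩
  rintro (hx | hx)
  · exact notMem_of_mem_greedy hx (Or.inl hZ)
  · refine notMem_of_mem_greedy hx (Or.inr ?_)
    simpa only [Set.mem_preimage, neg_vadd_vadd] using hZ

lemma disjoint_zone_marker {i j : ℕ} (hij : i ≠ j) :
    Disjoint (zone (marker ts κ i) (ts.getD i 0)) (zone (marker ts κ j) (ts.getD j 0)) := by
  rw [Set.disjoint_left]
  intro x hi hj
  rcases hij.lt_or_gt with h | h
  exacts [marker_zone_disjoint h hi hj, marker_zone_disjoint h hj hi]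

end Markers

section MarkerProperties

variable {G X : Type*} [AddCommGroup G] [AddAction G X] {ts : List G} {κ : X → ℕ}

lemma getD_mem {i : ℕ} (hi : i < ts.length) : ts.getD i 0 ∈ ts := by
  rw [List.getD_eq_getElem _ _ hi]
  exact List.getElem_mem hi

lemma getD_idxOf {t : G} (ht : t ∈ ts) : ts.getD (ts.idxOf t) 0 = t := by
  rw [List.getD_eq_getElem _ _ (List.idxOf_lt_length_iff.mpr ht), List.getElem_idxOf]

lemma mem_marker_or_blocked (x : X) (i : ℕ) :
    x ∈ marker ts κ i ∨
      (∃ t' ∈ ts, ∃ k : ℤ, k ≠ 0 ∧ k.natAbs ≤ reach ts (ts.getD i 0) t' ∧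
        k • t' +ᵥ x ∈ marker ts κ i) ∨
      x ∈ zonesBelow ts κ i ∨ -ts.getD i 0 +ᵥ x ∈ zonesBelow ts κ i := by
  by_cases hZ : x ∈ forbidden (ts.getD i 0) (zonesBelow ts κ i)
  · exact .inr (.inr hZ)
  rcases mem_greedy_or_exists_vadd_mem (D := conflicts ts (ts.getD i 0)) (κ := κ) hZ with
    hx | ⟨g, hg, hgx⟩
  · exact .inl hx
  · obtain ⟨t', ht', k, hk, hkr, rfl⟩ := mem_conflicts.mp hg
    exact .inr (.inl ⟨t', ht', k, hk, hkr, hgx⟩)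

/- A pair `(c, j)` records that a point `y` was kept out of `marker ts κ i` because
`c + y ∈ marker ts κ j`: either `j = i` and `c` is a short step in another direction, or `j < i`
and `y` lies in an earlier zone (`c ∈ {0, tⱼ}`) or `-tᵢ + y` does (`c ∈ {-tᵢ, tⱼ - tᵢ}`). -/

variable (ts) in
def crossShifts (i : ℕ) : Finset (G × ℕ) :=
  ((ts.toFinset.erase (ts.getD i 0)) ×ˢ Finset.Icc (-(crossSep ts : ℤ)) (crossSep ts)).image
    fun p => (p.2 • p.1, i)

variable (ts) in
def lowerShifts (i : ℕ) : Finset (G × ℕ) :=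
  (Finset.range i).biUnion fun j =>
    ({0, ts.getD j 0, -ts.getD i 0, ts.getD j 0 - ts.getD i 0} : Finset G).image (·, j)

lemma card_crossShifts_le (i : ℕ) :
    (crossShifts ts i).card ≤ ts.length * (2 * crossSep ts + 1) := by
  refine Finset.card_image_le.trans ?_
  rw [Finset.card_product, Int.card_Icc]
  exact Nat.mul_le_mul (Finset.card_erase_le.trans (List.toFinset_card_le _)) (by omega)

lemma card_lowerShifts_le (i : ℕ) : (lowerShifts ts i).card ≤ i * 4 := by
  have := Finset.card_biUnion_le_card_mul (Finset.range i)
    (fun j => ({0, ts.getD j 0, -ts.getD i 0, ts.getD j 0 - ts.getD i 0} : Finset G).image (·, j))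
    4 fun _ _ => Finset.card_image_le.trans Finset.card_le_four
  rwa [Finset.card_range] at this

lemma exists_shift_mem_of_forall_notMem {i : ℕ} {x : X} {N : ℤ}
    (hcon : ∀ k, N ≤ k → k • ts.getD i 0 +ᵥ x ∉ marker ts κ i) {k : ℤ} (hk : N + selfSep ts ≤ k) :
    ∃ p ∈ crossShifts ts i ∪ lowerShifts ts i, (p.1 + k • ts.getD i 0) +ᵥ x ∈ marker ts κ p.2 := by
  set t := ts.getD i 0
  have lower : ∀ j < i, ∀ c ∈ ({0, ts.getD j 0, -t, ts.getD j 0 - t} : Finset G),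
      (c + k • t) +ᵥ x ∈ marker ts κ j →
      ∃ p ∈ crossShifts ts i ∪ lowerShifts ts i, (p.1 + k • t) +ᵥ x ∈ marker ts κ p.2 :=
    fun j hj c hc h => ⟨(c, j), Finset.mem_union_right _ (Finset.mem_biUnion.mpr
      ⟨j, Finset.mem_range.mpr hj, Finset.mem_image.mpr ⟨c, hc, rfl⟩⟩), h⟩
  rcases mem_marker_or_blocked (ts := ts) (κ := κ) (k • t +ᵥ x) i with
    h | ⟨t', ht', k', hk', hkr, h⟩ | h | h
  · exact absurd h (hcon k (by omega))
  · by_cases htt : t' = t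
    · rw [htt, vadd_vadd, ← add_smul] at h
      rw [reach, if_pos htt] at hkr
      exact absurd h (hcon _ (by omega))
    · rw [reach, if_neg htt] at hkr
      refine ⟨(k' • t', i), Finset.mem_union_left _ (Finset.mem_image.mpr ⟨(t', k'), ?_, rfl⟩),
        by rwa [add_vadd]⟩
      simp only [Finset.mem_product, Finset.mem_erase, List.mem_toFinset, Finset.mem_Icc]
      exact ⟨⟨htt, ht'⟩, by omega, by omega⟩
  · obtain ⟨j, hj, h | h⟩ := mem_zonesBelow_iff.mp h
    · exact lower j hj 0 (by simp) (by rwa [zero_add])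
    · exact lower j hj (ts.getD j 0) (by simp) (by rwa [add_vadd])
  · obtain ⟨j, hj, h | h⟩ := mem_zonesBelow_iff.mp h
    · exact lower j hj (-t) (by simp) (by rwa [add_vadd])
    · exact lower j hj (ts.getD j 0 - t) (by simp) (by rwa [sub_eq_add_neg, add_vadd, add_vadd])

variable (hκ : ∀ x, ∀ t ∈ ts, ∀ g ∈ conflicts ts t, κ (g +ᵥ x) ≠ κ x)
include hκ

lemma separatedAlong_marker {i : ℕ} (hi : i < ts.length) {t' : G} (ht' : t' ∈ ts) :
    SeparatedAlong (marker ts κ i) t' (reach ts (ts.getD i 0) t') := by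
  intro y hy k hk hkd
  exact vadd_notMem_greedy (fun _ hg => neg_mem_conflicts hg)
    (fun y g hg => hκ y _ (getD_mem hi) g hg) hy
    (mem_conflicts.mpr ⟨t', ht', k, hk.ne', by omega, rfl⟩)

lemma card_filter_crossShifts_le {i : ℕ} (hi : i < ts.length) {p : G × ℕ}
    (hp : p ∈ crossShifts ts i) (x : X) (a : ℤ) :
    ((Finset.Icc a (a + 8 * selfSep ts)).filter
      fun k => (p.1 + k • ts.getD i 0) +ᵥ x ∈ marker ts κ p.2).card ≤ 9 := by
  obtain ⟨q, -, rfl⟩ := Finset.mem_image.mp hp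
  have hsep := separatedAlong_marker hκ hi (getD_mem hi)
  rw [reach, if_pos rfl] at hsep
  have := hsep.card_filter_mul_le (q.2 • q.1) x a (a + 8 * selfSep ts)
  have h9 : a + 8 * selfSep ts + (selfSep ts + 1 : ℕ) - a = (9 * selfSep ts + 1 : ℕ) := by
    push_cast; ring
  rw [h9, Int.toNat_natCast] at this
  exact Nat.le_of_mul_le_mul_right (this.trans (by omega)) (Nat.succ_pos _)

lemma card_filter_lowerShifts_le (hnd : ts.Nodup) {i : ℕ} (hi : i < ts.length) {p : G × ℕ}
    (hp : p ∈ lowerShifts ts i) (x : X) (a : ℤ) :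
    ((Finset.Icc a (a + 8 * selfSep ts)).filter
      fun k => (p.1 + k • ts.getD i 0) +ᵥ x ∈ marker ts κ p.2).card ≤ 8 * crossSep ts + 1 := by
  obtain ⟨j, hj, hp⟩ := Finset.mem_biUnion.mp hp
  obtain ⟨c, -, rfl⟩ := Finset.mem_image.mp hp
  have hji : j < i := Finset.mem_range.mp hj
  have hne : ts.getD i 0 ≠ ts.getD j 0 := by
    rw [List.getD_eq_getElem _ _ hi, List.getD_eq_getElem _ _ (hji.trans hi)]
    exact fun h => hji.ne' (hnd.getElem_inj_iff.mp h)
  have hsep := separatedAlong_marker hκ (hji.trans hi) (getD_mem hi)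
  rw [reach, if_neg hne] at hsep
  have := hsep.card_filter_mul_le c x a (a + 8 * selfSep ts)
  have hlen : a + 8 * selfSep ts + (crossSep ts + 1 : ℕ) - a =
      (8 * crossSep ts ^ 2 + crossSep ts + 1 : ℕ) := by
    rw [selfSep]; push_cast; ring
  rw [hlen, Int.toNat_natCast] at this
  by_contra! hlt
  nlinarith

theorem exists_zsmul_vadd_mem_marker (hnd : ts.Nodup) {i : ℕ} (hi : i < ts.length) (x : X)
    (N : ℤ) : ∃ k, N ≤ k ∧ k • ts.getD i 0 +ᵥ x ∈ marker ts κ i := by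
  by_contra! hcon
  set a := N + selfSep ts
  set hits : G × ℕ → Finset ℤ := fun p => (Finset.Icc a (a + 8 * selfSep ts)).filter
    fun k => (p.1 + k • ts.getD i 0) +ᵥ x ∈ marker ts κ p.2
  have hcover : Finset.Icc a (a + 8 * selfSep ts) ⊆
      (crossShifts ts i).biUnion hits ∪ (lowerShifts ts i).biUnion hits := by
    intro k hk
    obtain ⟨p, hp, hpk⟩ := exists_shift_mem_of_forall_notMem hcon (Finset.mem_Icc.mp hk).1
    rw [← Finset.union_biUnion]
    exact Finset.mem_biUnion.mpr ⟨p, hp, Finset.mem_filter.mpr ⟨hk, hpk⟩⟩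
  have hcount := (Finset.card_le_card hcover).trans (Finset.card_union_le _ _)
  have hcross := Finset.card_biUnion_le_card_mul _ hits 9 fun p hp =>
    card_filter_crossShifts_le hκ hi hp x a
  have hlower := Finset.card_biUnion_le_card_mul _ hits _ fun p hp =>
    card_filter_lowerShifts_le hκ hnd hi hp x a
  have hcard : (Finset.Icc a (a + 8 * selfSep ts)).card = 8 * crossSep ts ^ 2 + 1 := by
    rw [Int.card_Icc, selfSep]; omega
  have h1 := card_crossShifts_le (ts := ts) i
  have h2 := card_lowerShifts_le (ts := ts) i
  have hW : crossSep ts = 8 * (ts.length + 1) := rfl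
  rw [hcard] at hcount
  nlinarith

end MarkerProperties

section MarkerFamily

variable {G X : Type*} [AddCommGroup G] [AddAction G X] [TopologicalSpace X]
  [ContinuousConstVAdd G X]

lemma IsClopen.zone {B : Set X} (hB : IsClopen B) (t : G) : IsClopen (zone B t) :=
  hB.union (hB.preimage (continuous_const_vadd t))

lemma IsClopen.forbidden {Z : Set X} (hZ : IsClopen Z) (t : G) : IsClopen (forbidden t Z) :=
  hZ.union (hZ.preimage (continuous_const_vadd (-t)))

variable {ts : List G} {κ : X → ℕ}

lemma isClopen_zonesBelow (hκ : IsLocallyConstant κ) (i : ℕ) : IsClopen (zonesBelow ts κ i) := by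
  induction i with
  | zero => exact isClopen_empty
  | succ i ih => exact ih.union ((isClopen_greedy hκ (ih.forbidden _)).zone _)

lemma isClopen_marker (hκ : IsLocallyConstant κ) (i : ℕ) : IsClopen (marker ts κ i) :=
  isClopen_greedy hκ ((isClopen_zonesBelow hκ i).forbidden _)

lemma isMarkerFamily_marker (hnd : ts.Nodup) (hκ : IsLocallyConstant κ)
    (hκD : ∀ x, ∀ t ∈ ts, ∀ g ∈ conflicts ts t, κ (g +ᵥ x) ≠ κ x) :
    IsMarkerFamily ts.toFinset fun t => marker ts κ (ts.idxOf t) := by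
  refine ⟨fun t _ => isClopen_marker hκ _, fun t ht x hx => ?_, fun t ht x => ?_,
    fun t ht t' ht' hne => ?_⟩ <;> simp only [List.mem_toFinset] at ht
  · have hsep := separatedAlong_marker hκD (List.idxOf_lt_length_iff.mpr ht) ht
    rw [getD_idxOf ht, reach, if_pos rfl] at hsep
    simpa using hsep x hx 1 one_pos (by exact_mod_cast selfSep_pos ts)
  · obtain ⟨k, hk, hkx⟩ :=
      exists_zsmul_vadd_mem_marker hκD hnd (List.idxOf_lt_length_iff.mpr ht) x 1
    refine ⟨(k - 1).toNat, ?_⟩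
    rw [getD_idxOf ht] at hkx
    rwa [← natCast_zsmul, Nat.cast_add, Nat.cast_one, Int.toNat_of_nonneg (by omega),
      sub_add_cancel]
  · have ht' : t' ∈ ts := List.mem_toFinset.mp ht'
    have hdisj := disjoint_zone_marker (ts := ts) (κ := κ)
      (fun h : ts.idxOf t = ts.idxOf t' => hne (by rw [← getD_idxOf ht, h, getD_idxOf ht']))
    rwa [getD_idxOf ht, getD_idxOf ht'] at hdisj

theorem exists_isMarkerFamily [IsAddTorsionFree G]
    (hkey : ∀ D : Finset G, 0 ∉ D →
      ∃ κ : X → ℕ, IsLocallyConstant κ ∧ ∀ x, ∀ g ∈ D, κ (g +ᵥ x) ≠ κ x)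
    (T : Finset G) (hT : 0 ∉ T) : ∃ B : G → Set X, IsMarkerFamily T B := by
  have hD : 0 ∉ T.toList.toFinset.biUnion (conflicts T.toList) := by
    simp only [Finset.mem_biUnion, mem_conflicts, not_exists, not_and]
    intro _ _ t ht k hk _ hzero
    rcases IsAddTorsionFree.zsmul_eq_zero_iff.mp hzero with h | h
    exacts [hT (h ▸ Finset.mem_toList.mp ht), hk h]
  obtain ⟨κ, hκ, hκD⟩ := hkey _ hD
  refine ⟨_, Finset.toList_toFinset T ▸ isMarkerFamily_marker (Finset.nodup_toList T) hκ ?_⟩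
  exact fun x t ht g hg => hκD x g (Finset.mem_biUnion.mpr ⟨t, List.mem_toFinset.mpr ht, hg⟩)

end MarkerFamily

section SegmentColouring

variable {G X : Type*} [AddCommGroup G] [AddAction G X]

-- `sInf ∅ = 0`: the lemmas below assume that the forward `t`-ray from `x` meets `B`.
def segDist (B : Set X) (t : G) (x : X) : ℕ := sInf {m | (m + 1) • t +ᵥ x ∈ B}

lemma segDist_eq_iff {B : Set X} {t : G} {x : X} (h : ∃ m : ℕ, (m + 1) • t +ᵥ x ∈ B) {m : ℕ} :
    segDist B t x = m ↔ (m + 1) • t +ᵥ x ∈ B ∧ ∀ l < m, (l + 1) • t +ᵥ x ∉ B := by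
  rw [segDist, Nat.sInf_def (s := {m | (m + 1) • t +ᵥ x ∈ B}) h, Nat.find_eq_iff]
  rfl

lemma segDist_eq_zero_iff {B : Set X} {t : G} {x : X} (h : ∃ m : ℕ, (m + 1) • t +ᵥ x ∈ B) :
    segDist B t x = 0 ↔ t +ᵥ x ∈ B := by
  simp [segDist_eq_iff h]

lemma segDist_eq_segDist_vadd_add_one {B : Set X} {t : G} {x : X}
    (h : ∃ m : ℕ, (m + 1) • t +ᵥ (t +ᵥ x) ∈ B) (hx : t +ᵥ x ∉ B) :
    segDist B t x = segDist B t (t +ᵥ x) + 1 := by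
  have hshift : ∀ m : ℕ, (m + 1) • t +ᵥ (t +ᵥ x) = (m + 1 + 1) • t +ᵥ x := fun m => by
    rw [vadd_vadd, ← succ_nsmul]
  have h' : ∃ m : ℕ, (m + 1) • t +ᵥ x ∈ B := ⟨_, hshift _ ▸ h.choose_spec⟩
  obtain ⟨hmem, hmin⟩ := (segDist_eq_iff h).mp rfl
  refine (segDist_eq_iff h').mpr ⟨hshift _ ▸ hmem, fun l hl => ?_⟩
  rcases l with _ | l
  · simpa using hx
  · exact hshift l ▸ hmin l (by omega)

lemma isLocallyConstant_segDist [TopologicalSpace X] [ContinuousConstVAdd G X] {B : Set X} {t : G}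
    (hB : IsClopen B) (h : ∀ x, ∃ m : ℕ, (m + 1) • t +ᵥ x ∈ B) :
    IsLocallyConstant (segDist B t) := by
  refine IsLocallyConstant.iff_isOpen_fiber.mpr fun m => ?_
  have hfiber : segDist B t ⁻¹' {m} =
      ((m + 1) • t +ᵥ ·) ⁻¹' B ∩ ⋂ l ∈ Finset.range m, ((l + 1) • t +ᵥ ·) ⁻¹' Bᶜ := by
    ext x
    simp [segDist_eq_iff (h x)]
  rw [hfiber]
  exact (hB.isOpen.preimage (continuous_const_vadd _)).inter
    (isOpen_biInter_finset fun l _ => hB.compl.isOpen.preimage (continuous_const_vadd _))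

variable (T : Finset G) (B : G → Set X) in
def segColour (t : T) (x : X) : Option (T × Bool) :=
  if segDist (B t) (t : G) x = 0 then none else some (t, (segDist (B t) (t : G) x).bodd)

variable [TopologicalSpace X] {T : Finset G} {B : G → Set X}

lemma isLocallyConstant_segColour [ContinuousConstVAdd G X] (hB : IsMarkerFamily T B) (t : T) :
    IsLocallyConstant (segColour T B t) :=
  (isLocallyConstant_segDist (t := (t : G)) (hB.isClopen t t.2)
    (hB.exists_nsmul_vadd_mem t t.2)).comp
    fun d => if d = 0 then none else some (t, d.bodd)

lemma segColour_vadd_ne (hB : IsMarkerFamily T B) (t : T) (x : X) :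
    segColour T B t x ≠ segColour T B t ((t : G) +ᵥ x) := by
  have hit := hB.exists_nsmul_vadd_mem t t.2
  by_cases hx : (t : G) +ᵥ x ∈ B t
  · have hx' : (t : G) +ᵥ ((t : G) +ᵥ x) ∉ B t := hB.vadd_notMem t t.2 _ hx
    simp [segColour, (segDist_eq_zero_iff (hit x)).mpr hx, segDist_eq_zero_iff (hit _), hx']
  · have hd := segDist_eq_segDist_vadd_add_one (hit _) hx
    simp [segColour, hd, Nat.bodd_succ]

lemma mem_zone_of_segColour_eq_none (hB : IsMarkerFamily T B) {t : T} {x : X}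
    (h : segColour T B t x = none) : ∀ v ∈ s(x, (t : G) +ᵥ x), v ∈ zone (B t) (t : G) := by
  have hd : segDist (B t) (t : G) x = 0 := by
    by_contra hd
    simp [segColour, hd] at h
  have hx := (segDist_eq_zero_iff (hB.exists_nsmul_vadd_mem t t.2 x)).mp hd
  intro v hv
  rcases Sym2.mem_iff.mp hv with rfl | rfl
  exacts [.inr hx, .inl hx]

lemma segColour_ne (hB : IsMarkerFamily T B) {t t' : T} {x x' v : X}
    (hv : v ∈ s(x, (t : G) +ᵥ x)) (hv' : v ∈ s(x', (t' : G) +ᵥ x'))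
    (hne : s(x, (t : G) +ᵥ x) ≠ s(x', (t' : G) +ᵥ x')) :
    segColour T B t x ≠ segColour T B t' x' := by
  intro heq
  by_cases htt : t = t'
  · subst htt
    rcases Sym2.mem_iff.mp hv with rfl | rfl <;> rcases Sym2.mem_iff.mp hv' with h | h
    · exact hne (by rw [h])
    · exact segColour_vadd_ne hB t x' (h ▸ heq.symm)
    · exact segColour_vadd_ne hB t x (h ▸ heq)
    · exact hne (by rw [vadd_left_cancel _ h])
  · cases hc : segColour T B t x with
    | none =>
      rw [hc] at heq
      exact Set.disjoint_left.mp (hB.disjoint_zone t t.2 t' t'.2 (Subtype.coe_injective.ne htt))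
        (mem_zone_of_segColour_eq_none hB hc v hv) (mem_zone_of_segColour_eq_none hB heq.symm v hv')
    | some c =>
      rw [hc] at heq
      have hc' := heq.symm
      simp only [segColour] at hc hc'
      split_ifs at hc hc'
      simp only [Option.some.injEq] at hc hc'
      exact htt (congrArg Prod.fst (hc.trans hc'.symm))

end SegmentColouring

section EdgeColouring

variable {G X : Type*} [AddCommGroup G] [AddAction G X]

variable (T : Finset G) (B : G → Set X) in
def edgeColour (e : Sym2 X) : Option (T × Bool) :=
  if h : ∃ p : T × X, s(p.2, (p.1 : G) +ᵥ p.2) = e then segColour T B h.choose.1 h.choose.2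
  else none

variable {T : Finset G} {B : G → Set X}

lemma eq_of_sym2_vadd_eq (hT : ∀ t ∈ T, -t ∉ T) (hfree : ∀ (g : G) (x : X), g +ᵥ x = x → g = 0)
    {t t' : T} {x x' : X} (h : s(x, (t : G) +ᵥ x) = s(x', (t' : G) +ᵥ x')) : t = t' ∧ x = x' := by
  rcases Sym2.eq_iff.mp h with ⟨rfl, h⟩ | ⟨rfl, h⟩
  · refine ⟨Subtype.ext ?_, rfl⟩
    have := hfree _ x (by rw [← vadd_vadd, ← h, neg_vadd_vadd])
    exact neg_add_eq_zero.mp this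
  · rw [vadd_vadd] at h
    have ht : (t' : G) = -t := eq_neg_of_add_eq_zero_right (hfree _ x' h)
    exact absurd (ht ▸ t'.2) (hT t t.2)

lemma edgeColour_eq (hT : ∀ t ∈ T, -t ∉ T) (hfree : ∀ (g : G) (x : X), g +ᵥ x = x → g = 0)
    {t : T} {x : X} {e : Sym2 X} (h : s(x, (t : G) +ᵥ x) = e) :
    edgeColour T B e = segColour T B t x := by
  have hex : ∃ p : T × X, s(p.2, (p.1 : G) +ᵥ p.2) = e := ⟨(t, x), h⟩
  obtain ⟨ht, hx⟩ := eq_of_sym2_vadd_eq hT hfree (hex.choose_spec.trans h.symm)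
  rw [edgeColour, dif_pos hex, ht, hx]

end EdgeColouring

section SchreierEdges

variable {S T : Finset (Fin 2 → ℤ)} {B : (Fin 2 → ℤ) → Set (FreePart 2)}

lemma exists_orientation (hT : IsSignTransversal S T) {x y : FreePart 2}
    (h : (SchreierS S).Adj x y) : ∃ t : T, y = (t : Fin 2 → ℤ) +ᵥ x ∨ x = (t : Fin 2 → ℤ) +ᵥ y := by
  obtain ⟨hne, g, hg, hgxy⟩ := schreierS_adj_iff.mp h
  have hg0 : g ≠ 0 := by
    rintro rfl
    rcases hgxy with h | h <;> simp only [zero_vadd] at h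
    exacts [hne h, hne h.symm]
  rcases hgxy with h | h <;> rcases hT.mem_or_neg_mem g hg hg0 with hgT | hgT
  · exact ⟨⟨g, hgT⟩, .inl h.symm⟩
  · exact ⟨⟨-g, hgT⟩, .inr (by rw [← h, neg_vadd_vadd])⟩
  · exact ⟨⟨g, hgT⟩, .inr h.symm⟩
  · exact ⟨⟨-g, hgT⟩, .inl (by rw [← h, neg_vadd_vadd])⟩

lemma edgeColour_eq_of_eq_vadd_fst (hT : IsSignTransversal S T) {x y : FreePart 2} {t : T}
    (h : y = (t : Fin 2 → ℤ) +ᵥ x) : edgeColour T B s(x, y) = segColour T B t x :=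
  edgeColour_eq hT.neg_notMem (fun _ _ => eq_zero_of_vadd_eq_self) (by rw [h])

lemma edgeColour_eq_of_eq_vadd_snd (hT : IsSignTransversal S T) {x y : FreePart 2} {t : T}
    (h : x = (t : Fin 2 → ℤ) +ᵥ y) : edgeColour T B s(x, y) = segColour T B t y :=
  edgeColour_eq hT.neg_notMem (fun _ _ => eq_zero_of_vadd_eq_self) (by rw [h, Sym2.eq_swap])

lemma IsClosed.eventually_imp_mem {Y : Type*} [TopologicalSpace Y] {F : Set Y} (hF : IsClosed F)
    (p : Y) : ∀ᶠ q in 𝓝 p, q ∈ F → p ∈ F := by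
  by_cases hp : p ∈ F
  · exact .of_forall fun _ _ => hp
  · exact Filter.eventually_of_mem (hF.isOpen_compl.mem_nhds hp) fun _ hq hqF => absurd hqF hq

/-- The edges are covered by the finitely many closed sets `{(x, t + x)}` and `{(t + x, x)}`,
`t ∈ T`, so edges near `p` lie in a piece containing `p`; on each piece the colour is the
locally constant colour of one endpoint. -/
lemma isLocallyConstant_edgeColour (hT : IsSignTransversal S T) (hB : IsMarkerFamily T B) :
    IsLocallyConstant fun p : {p : FreePart 2 × FreePart 2 // (SchreierS S).Adj p.1 p.2} =>
      edgeColour T B s(p.1.1, p.1.2) := by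
  refine (IsLocallyConstant.iff_eventually_eq _).mpr fun p => ?_
  have hfst : Continuous fun q : {p : FreePart 2 × FreePart 2 // (SchreierS S).Adj p.1 p.2} =>
      q.1.1 := continuous_fst.comp continuous_subtype_val
  have hsnd : Continuous fun q : {p : FreePart 2 × FreePart 2 // (SchreierS S).Adj p.1 p.2} =>
      q.1.2 := continuous_snd.comp continuous_subtype_val
  have hpieces : ∀ᶠ q in 𝓝 p, ∀ t : T,
      (q.1.2 = (t : Fin 2 → ℤ) +ᵥ q.1.1 → p.1.2 = (t : Fin 2 → ℤ) +ᵥ p.1.1) ∧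
      (q.1.1 = (t : Fin 2 → ℤ) +ᵥ q.1.2 → p.1.1 = (t : Fin 2 → ℤ) +ᵥ p.1.2) ∧
      segColour T B t q.1.1 = segColour T B t p.1.1 ∧
      segColour T B t q.1.2 = segColour T B t p.1.2 :=
    eventually_all.mpr fun t =>
      ((isClosed_eq hsnd ((continuous_const_vadd _).comp hfst)).eventually_imp_mem p).and <|
      ((isClosed_eq hfst ((continuous_const_vadd _).comp hsnd)).eventually_imp_mem p).and <|
      (((isLocallyConstant_segColour hB t).comp_continuous hfst).eventually_eq p).and
        (((isLocallyConstant_segColour hB t).comp_continuous hsnd).eventually_eq p)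
  filter_upwards [hpieces] with q hq
  obtain ⟨t, hqt | hqt⟩ := exists_orientation hT q.2
  · obtain ⟨hp, -, hc, -⟩ := hq t
    rw [edgeColour_eq_of_eq_vadd_fst hT hqt, edgeColour_eq_of_eq_vadd_fst hT (hp hqt), hc]
  · obtain ⟨-, hp, -, hc⟩ := hq t
    rw [edgeColour_eq_of_eq_vadd_snd hT hqt, edgeColour_eq_of_eq_vadd_snd hT (hp hqt), hc]

lemma edgeColour_ne (hT : IsSignTransversal S T) (hB : IsMarkerFamily T B) {x y z : FreePart 2}
    (hxy : (SchreierS S).Adj x y) (hyz : (SchreierS S).Adj y z) (hxz : x ≠ z) :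
    edgeColour T B s(x, y) ≠ edgeColour T B s(y, z) := by
  have horient : ∀ {a b : FreePart 2}, (SchreierS S).Adj a b → ∃ (t : T) (c : FreePart 2),
      s(c, (t : Fin 2 → ℤ) +ᵥ c) = s(a, b) ∧ edgeColour T B s(a, b) = segColour T B t c := by
    intro a b hab
    obtain ⟨t, h | h⟩ := exists_orientation hT hab
    · exact ⟨t, a, by rw [h], edgeColour_eq_of_eq_vadd_fst hT h⟩
    · exact ⟨t, b, by rw [h, Sym2.eq_swap], edgeColour_eq_of_eq_vadd_snd hT h⟩
  obtain ⟨t, c, hc, hcol⟩ := horient hxy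
  obtain ⟨t', c', hc', hcol'⟩ := horient hyz
  rw [hcol, hcol']
  refine segColour_ne hB (v := y) (hc ▸ Sym2.mem_mk_right _ _) (hc' ▸ Sym2.mem_mk_left _ _) ?_
  rw [hc, hc']
  intro h
  rcases Sym2.eq_iff.mp h with ⟨hxy', -⟩ | ⟨hxz', -⟩
  exacts [hxy.ne hxy', hxz hxz']

end SchreierEdges

end

theorem stmt14_general (S : Finset (Fin 2 → ℤ)) :
    ∃ c : {p : FreePart 2 × FreePart 2 // (SchreierS S).Adj p.1 p.2} → Fin (2 * S.card + 1),
      Continuous c ∧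
      (∀ p q, p.val.1 = q.val.2 → p.val.2 = q.val.1 → c p = c q) ∧
      (∀ p q, p.val.2 = q.val.1 → p.val.1 ≠ q.val.2 → c p ≠ c q) := by
  obtain ⟨T, hT, hcard⟩ := exists_isSignTransversal S
  obtain ⟨B, hB⟩ := exists_isMarkerFamily (X := FreePart 2)
    (fun _ hD => exists_isLocallyConstant_vadd_ne hD) T hT.zero_notMem
  let colours : Option (T × Bool) ↪ Fin (2 * S.card + 1) :=
    (Fintype.equivFin _).toEmbedding.trans (Fin.castLEEmb (by simp; omega))
  refine ⟨fun p => colours (edgeColour T B s(p.1.1, p.1.2)),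
    ((isLocallyConstant_edgeColour hT hB).comp colours).continuous, fun p q h1 h2 => ?_,
    fun p q h1 h2 => colours.injective.ne ?_⟩
  · simp only [h1, h2, Sym2.eq_swap]
  · have hq : (SchreierS S).Adj p.1.2 q.1.2 := h1 ▸ q.2
    rw [← h1]
    exact edgeColour_ne hT hB p.2 hq h2

theorem stmt14 (S : Finset (Fin 2 → ℤ))
    (hgen : AddSubgroup.closure (S : Set (Fin 2 → ℤ)) = ⊤) :
    ∃ c : {p : FreePart 2 × FreePart 2 // (SchreierS S).Adj p.1 p.2} → Fin (2 * S.card + 1),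
      Continuous c ∧
      (∀ p q, p.val.1 = q.val.2 → p.val.2 = q.val.1 → c p = c q) ∧
      (∀ p q, p.val.2 = q.val.1 → p.val.1 ≠ q.val.2 → c p ≠ c q) :=
  stmt14_general S
end

section
/- Let n, d ≥ 1, 1 ≤ i ≤ n, and let R be a generalized n-dimensional rectangle in ℤⁿ with side length exactly 2dⁿ − d − 1 ≥ 0 in direction e_i (i-th side [0, 2dⁿ − d − 1]). Define M inductively: for n = 1, M is a singleton; for n > 1 (with i = 1), letting M_{n−1} ⊆ [0, 2d^{n−1} − d − 1] × [0,b₂] × ⋯ × [0,b_{n−1}] be the set from dimension n−1, set M = ⋃_{t ∈ [0,bₙ]} (M_{n−1} + 2(t mod d)d^{n−1}e₁) × {t}. Then for any distinct x, y ∈ M with x(n) ≠ y(n), one has |x(1) − y(1)| ≥ d; in particular ρ(x,y) ≥ d. -/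
/-- The sup metric on `ℤⁿ`, valued in `ℕ`. -/
def rho {n : ℕ} (x y : Fin n → ℤ) : ℕ := Finset.univ.sup fun i => (x i - y i).natAbs

lemma rho_coord {n : ℕ} (x y : Fin n → ℤ) (i : Fin n) {d : ℕ}
    (h : (d : ℤ) ≤ |x i - y i|) : d ≤ rho x y := by
  have h1 : d ≤ (x i - y i).natAbs := by
    rw [Int.abs_eq_natAbs] at h; exact_mod_cast h
  unfold rho
  exact le_trans h1 (Finset.le_sup (f := fun i => (x i - y i).natAbs) (Finset.mem_univ i))

theorem stmt16 (m d : ℕ) (hd : 1 ≤ d)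
    (b : Fin (m + 2) → ℤ) (hb : ∀ i, 0 ≤ b i)
    (M' : Set (Fin (m + 2) → ℤ))
    -- `M'` lives in the slab `[0, 2d^{n-1}-d-1] × [0,b₂] × ⋯ × [0,b_{n-1}] × {0}`
    (hM'box : ∀ x ∈ M', (∀ i, 0 ≤ x i ∧ x i ≤ b i) ∧
      x 0 ≤ 2 * (d : ℤ) ^ (m + 1) - d - 1 ∧ x (Fin.last (m + 1)) = 0)
    -- `M'` is `d`-separated
    (hM'sep : ∀ x ∈ M', ∀ y ∈ M', x ≠ y → d ≤ rho x y) :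
    -- the layers `M' + 2(t mod d)d^{n-1}e₁ + t·eₙ` for `t ∈ [0, bₙ]` are `d`-separated
    ∀ x ∈ M', ∀ y ∈ M',
    ∀ t₁ ∈ Set.Icc (0 : ℤ) (b (Fin.last (m + 1))),
    ∀ t₂ ∈ Set.Icc (0 : ℤ) (b (Fin.last (m + 1))),
      (t₁ % d ≠ t₂ % d →
        (d : ℤ) ≤ |(x 0 + 2 * (t₁ % d) * (d : ℤ) ^ (m + 1)) -
          (y 0 + 2 * (t₂ % d) * (d : ℤ) ^ (m + 1))|) ∧
      (t₁ % d = t₂ % d → t₁ ≠ t₂ → (d : ℤ) ≤ |t₁ - t₂|) ∧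
      (∀ p q : Fin (m + 2) → ℤ,
        p = x + (2 * (t₁ % d) * (d : ℤ) ^ (m + 1)) • (Pi.single 0 1 : Fin (m + 2) → ℤ)
              + t₁ • (Pi.single (Fin.last (m + 1)) 1 : Fin (m + 2) → ℤ) →
        q = y + (2 * (t₂ % d) * (d : ℤ) ^ (m + 1)) • (Pi.single 0 1 : Fin (m + 2) → ℤ)
              + t₂ • (Pi.single (Fin.last (m + 1)) 1 : Fin (m + 2) → ℤ) →
        p ≠ q → d ≤ rho p q) := by
  intro x hx y hy t₁ ht₁ t₂ ht₂
  have hdZ : (1 : ℤ) ≤ d := by exact_mod_cast hd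
  have hD : (d : ℤ) ≤ (d : ℤ) ^ (m + 1) := by
    calc (d : ℤ) = (d:ℤ)^1 := (pow_one _).symm
    _ ≤ (d:ℤ)^(m+1) := pow_le_pow_right₀ hdZ (by omega)
  obtain ⟨hxb, hx0, hxl⟩ := hM'box x hx
  obtain ⟨hyb, hy0, hyl⟩ := hM'box y hy
  have hx0' := (hxb 0).1
  have hy0' := (hyb 0).1
  have hr1 : 0 ≤ t₁ % d ∧ t₁ % d < d :=
    ⟨Int.emod_nonneg _ (by positivity), Int.emod_lt_of_pos _ (by positivity)⟩
  have hr2 : 0 ≤ t₂ % d ∧ t₂ % d < d :=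
    ⟨Int.emod_nonneg _ (by positivity), Int.emod_lt_of_pos _ (by positivity)⟩
  have part1 : t₁ % d ≠ t₂ % d →
      (d : ℤ) ≤ |(x 0 + 2 * (t₁ % d) * (d : ℤ) ^ (m + 1)) -
        (y 0 + 2 * (t₂ % d) * (d : ℤ) ^ (m + 1))| := by
    intro hne
    set D := (d:ℤ)^(m+1) with hDdef
    have h1 : 1 ≤ |t₁ % d - t₂ % d| := by
      rcases lt_or_gt_of_ne hne with h | h
      · rw [abs_of_neg (by omega)]; omega
      · rw [abs_of_pos (by omega)]; omega
    have hDpos : 0 < D := by positivity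
    have hb2 : 2 * D ≤ |2 * (t₁ % d) * D - 2 * (t₂ % d) * D| := by
      have : |2 * (t₁ % d) * D - 2 * (t₂ % d) * D| = 2 * |t₁ % d - t₂ % d| * D := by
        rw [show 2 * (t₁ % d) * D - 2 * (t₂ % d) * D = 2 * (t₁ % d - t₂ % d) * D by ring,
          abs_mul, abs_mul, abs_of_pos hDpos]
        norm_num
      rw [this]; nlinarith
    have ha : |x 0 - y 0| ≤ 2 * D - d - 1 := by
      rw [abs_le]; constructor <;> linarith
    calc (d:ℤ) ≤ 2 * D - (2 * D - d - 1) := by ring_nf; linarith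
    _ ≤ |2 * (t₁ % d) * D - 2 * (t₂ % d) * D| - |x 0 - y 0| := by linarith
    _ ≤ |(2 * (t₁ % d) * D - 2 * (t₂ % d) * D) + (x 0 - y 0)| := by
        have := abs_sub_abs_le_abs_sub (2 * (t₁ % d) * D - 2 * (t₂ % d) * D) (-(x 0 - y 0))
        rw [abs_neg, sub_neg_eq_add] at this; linarith
    _ = _ := by ring_nf
  have part2 : t₁ % d = t₂ % d → t₁ ≠ t₂ → (d : ℤ) ≤ |t₁ - t₂| := by
    intro heq hne
    have hdvd : (d:ℤ) ∣ (t₂ - t₁) := Int.ModEq.dvd heq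
    have hne' : t₁ - t₂ ≠ 0 := sub_ne_zero.mpr hne
    have habs : (d:ℤ) ∣ |t₁ - t₂| := by
      rw [abs_sub_comm]; exact (dvd_abs _ _).mpr hdvd
    exact Int.le_of_dvd (abs_pos.mpr hne') habs
  refine ⟨part1, part2, ?_⟩
  intro p q hp hq hpq
  have hlast0 : (Fin.last (m+1)) ≠ (0 : Fin (m+2)) := by
    simp [Fin.ext_iff, Fin.last]
  have hp0 : p 0 = x 0 + 2 * (t₁ % d) * (d : ℤ) ^ (m + 1) := by
    simp [hp, Pi.single_eq_same, Pi.single_eq_of_ne' hlast0]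
  have hq0 : q 0 = y 0 + 2 * (t₂ % d) * (d : ℤ) ^ (m + 1) := by
    simp [hq, Pi.single_eq_same, Pi.single_eq_of_ne' hlast0]
  have hpl : p (Fin.last (m+1)) = t₁ := by
    simp [hp, Pi.single_eq_same, Pi.single_eq_of_ne hlast0, hxl]
  have hql : q (Fin.last (m+1)) = t₂ := by
    simp [hq, Pi.single_eq_same, Pi.single_eq_of_ne hlast0, hyl]
  by_cases hmod : t₁ % d = t₂ % d
  · by_cases hts : t₁ = t₂
    · -- then x ≠ y and rho p q = rho x y
      have hxy : x ≠ y := by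
        intro h; apply hpq; rw [hp, hq, h, hmod, hts]
      have : rho p q = rho x y := by
        unfold rho
        congr 1; funext i
        have : p i - q i = x i - y i := by
          rw [hp, hq, hmod, hts]
          simp only [Pi.add_apply, Pi.smul_apply, smul_eq_mul]
          ring
        rw [this]
      rw [this]; exact hM'sep x hx y hy hxy
    · exact rho_coord p q (Fin.last (m+1)) (by rw [hpl, hql]; exact part2 hmod hts)
  · exact rho_coord p q 0 (by rw [hp0, hq0]; exact part1 hmod)
end

section
/- Let n ≥ 1 and let v = (ν₁, …, νₙ) ∈ ℤⁿ with νₙ ≠ 0 and all ν_i ≠ 0. Let S = Q × {0} where Q = [a₁,b₁] × ⋯ × [a_{n−1},b_{n−1}] ⊆ ℤ^{n−1}. Then the infinite generalized parallelopiped L(S, v) = (Hull(S) + ℝv) ∩ ℤⁿ equals ⋃_{0 ≤ t ≤ |νₙ|−1} (S_t + ℤv), where S_t = [a_{1,t}, b_{1,t}] × ⋯ × [a_{n−1,t}, b_{n−1,t}] × {t} and [a_{i,t}, b_{i,t}] = {x ∈ ℤ : a_i + t·ν_i/νₙ ≤ x ≤ b_i + t·ν_i/νₙ}. -/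
/-- A generalized `n`-dimensional rectangle `[a₁,b₁] × ⋯ × [aₙ,bₙ]` in `ℤⁿ`. -/
def genRect {n : ℕ} (a b : Fin n → ℤ) : Set (Fin n → ℤ) := {x | ∀ i, a i ≤ x i ∧ x i ≤ b i}

/-- The canonical embedding of `ℤⁿ` into `ℝⁿ`. -/
noncomputable def toR {n : ℕ} (x : Fin n → ℤ) : Fin n → ℝ := fun j => (x j : ℝ)

/-- The infinite generalized parallelopiped `L(S, v) = (Hull(S) + ℝv) ∩ ℤⁿ`. -/
noncomputable def Linf {n : ℕ} (S : Set (Fin n → ℤ)) (v : Fin n → ℤ) : Set (Fin n → ℤ) :=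
  {x | ∃ p ∈ convexHull ℝ (toR '' S), ∃ t : ℝ, toR x = p + t • toR v}

private lemma hull_genRect {n : ℕ} (a b : Fin n → ℤ) (hab : ∀ i, a i ≤ b i) :
    convexHull ℝ (toR '' genRect a b) =
      {p : Fin n → ℝ | ∀ i, (a i : ℝ) ≤ p i ∧ p i ≤ (b i : ℝ)} := by
  have h1 : toR '' genRect a b =
      Set.pi Set.univ (fun i => (Int.cast : ℤ → ℝ) '' Set.Icc (a i) (b i)) := by
    ext p
    constructor
    · rintro ⟨x, hx, rfl⟩ i _
      exact ⟨x i, Set.mem_Icc.mpr ⟨(hx i).1, (hx i).2⟩, rfl⟩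
    · intro hp
      choose x hx1 hx2 using fun i => hp i (Set.mem_univ i)
      exact ⟨x, fun i => Set.mem_Icc.mp (hx1 i), funext fun i => (hx2 i)⟩
  have h2 : ∀ i : Fin n, convexHull ℝ ((Int.cast : ℤ → ℝ) '' Set.Icc (a i) (b i))
      = Set.Icc (a i : ℝ) (b i : ℝ) := by
    intro i
    apply Set.Subset.antisymm
    · apply convexHull_min _ (convex_Icc _ _)
      rintro p ⟨x, hx, rfl⟩
      exact ⟨by exact_mod_cast hx.1, by exact_mod_cast hx.2⟩
    · rw [← segment_eq_Icc (by exact_mod_cast hab i)]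
      exact segment_subset_convexHull ⟨a i, Set.mem_Icc.mpr ⟨le_refl _, hab i⟩, rfl⟩
        ⟨b i, Set.mem_Icc.mpr ⟨hab i, le_refl _⟩, rfl⟩
  rw [h1, convexHull_pi]
  ext p
  simp [Set.mem_pi, h2, Set.mem_Icc, forall_and, Pi.le_def]


theorem stmt17 (m : ℕ) (v : Fin (m + 1) → ℤ) (hv : ∀ j, v j ≠ 0)
    (a b : Fin (m + 1) → ℤ) (hab : ∀ j, a j ≤ b j)
    (ha : a (Fin.last m) = 0) (hb : b (Fin.last m) = 0) :
    Linf (genRect a b) v =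
      {x | ∃ t : ℤ, 0 ≤ t ∧ t ≤ |v (Fin.last m)| - 1 ∧ ∃ c : ℤ,
        -- `x - c·v` lies in the slice `S_t`
        x (Fin.last m) - c * v (Fin.last m) = t ∧
        ∀ i : Fin (m + 1), i ≠ Fin.last m →
          (a i : ℚ) + (t : ℚ) * (v i : ℚ) / (v (Fin.last m) : ℚ) ≤ ((x i - c * v i : ℤ) : ℚ) ∧
          ((x i - c * v i : ℤ) : ℚ) ≤ (b i : ℚ) + (t : ℚ) * (v i : ℚ) / (v (Fin.last m) : ℚ)} := by
  set k : ℤ := v (Fin.last m) with hkdef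
  have hk : k ≠ 0 := hv _
  have hkR : (k : ℝ) ≠ 0 := Int.cast_ne_zero.mpr hk
  ext x
  simp only [Linf, hull_genRect a b hab, Set.mem_setOf_eq]
  constructor
  · rintro ⟨p, hp, s, hxs⟩
    have hcoord : ∀ j, (x j : ℝ) = p j + s * (v j : ℝ) := by
      intro j
      have := congrFun hxs j
      simpa [toR] using this
    -- last coordinate
    have hlast : (x (Fin.last m) : ℝ) = s * (k : ℝ) := by
      have h0 : p (Fin.last m) = 0 := by
        have := hp (Fin.last m)
        rw [ha, hb] at this
        simpa using le_antisymm this.2 this.1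
      have := hcoord (Fin.last m)
      rw [h0] at this; simpa using this
    -- choose t and c
    refine ⟨x (Fin.last m) % |k|, Int.emod_nonneg _ (by simpa using hk), ?_, ?_⟩
    · have := Int.emod_lt_of_pos (x (Fin.last m)) (abs_pos.mpr hk)
      omega
    · set t : ℤ := x (Fin.last m) % |k| with htdef
      have hdvd : k ∣ x (Fin.last m) - t := by
        rw [← abs_dvd]
        exact ⟨x (Fin.last m) / |k|, by
          have := Int.emod_add_mul_ediv (x (Fin.last m)) |k|
          omega⟩
      refine ⟨(x (Fin.last m) - t) / k, ?_, ?_⟩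
      · have := Int.ediv_mul_cancel hdvd
        omega
      · intro i hi
        set c : ℤ := (x (Fin.last m) - t) / k with hcdef
        have hck : c * k = x (Fin.last m) - t := Int.ediv_mul_cancel hdvd
        have hckR : (c : ℝ) * (k : ℝ) = (x (Fin.last m) : ℝ) - (t : ℝ) := by
          exact_mod_cast congrArg (Int.cast : ℤ → ℝ) hck
        have hs : s = (c : ℝ) + (t : ℝ) / (k : ℝ) := by
          field_simp
          nlinarith [hlast, hckR]
        have hpi := hp i
        have hpieq : p i = (x i : ℝ) - s * (v i : ℝ) := by linarith [hcoord i]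
        rw [hpieq, hs] at hpi
        have hexp : ((c : ℝ) + (t : ℝ) / (k : ℝ)) * (v i : ℝ)
            = (c : ℝ) * (v i : ℝ) + (t : ℝ) * (v i : ℝ) / (k : ℝ) := by ring
        rw [hexp] at hpi
        constructor
        · rw [← Rat.cast_le (K := ℝ)]
          push_cast
          linarith [hpi.1]
        · rw [← Rat.cast_le (K := ℝ)]
          push_cast
          linarith [hpi.2]
  · rintro ⟨t, ht0, ht1, c, htc, hbd⟩
    set s : ℝ := (c : ℝ) + (t : ℝ) / (k : ℝ) with hsdef
    refine ⟨fun j => (x j : ℝ) - s * (v j : ℝ), ?_, s, ?_⟩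
    · intro i
      rcases eq_or_ne i (Fin.last m) with rfl | hi
      · have hxk : (x (Fin.last m) : ℝ) - (c : ℝ) * (k : ℝ) = (t : ℝ) := by
          exact_mod_cast congrArg (Int.cast : ℤ → ℝ) htc
        have : (x (Fin.last m) : ℝ) - s * (k : ℝ) = 0 := by
          rw [hsdef]
          field_simp
          linarith
        show (↑(a (Fin.last m)) : ℝ) ≤ ↑(x (Fin.last m)) - s * ↑(v (Fin.last m)) ∧
          (↑(x (Fin.last m)) : ℝ) - s * ↑(v (Fin.last m)) ≤ ↑(b (Fin.last m))
        rw [ha, hb, ← hkdef, this]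
        simp
      · have h1 := (hbd i hi).1
        have h2 := (hbd i hi).2
        rw [← Rat.cast_le (K := ℝ)] at h1 h2
        push_cast at h1 h2
        have hexp : s * (v i : ℝ)
            = (c : ℝ) * (v i : ℝ) + (t : ℝ) * (v i : ℝ) / (k : ℝ) := by rw [hsdef]; ring
        show (↑(a i) : ℝ) ≤ ↑(x i) - s * ↑(v i) ∧ (↑(x i) : ℝ) - s * ↑(v i) ≤ ↑(b i)
        rw [hexp]
        constructor <;> linarith
    · funext j
      simp only [toR, Pi.add_apply, Pi.smul_apply, smul_eq_mul]
      ring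
end
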